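/- arXiv:2409.18906 — 2 statements merged into one kernel-verified Lean document; each statement's English description precedes it below -/
import Mathlib

section
/- In S = ℂ[x₁, x₂, x₃, x₄], the power sum p₅ lies in the ideal generated by p₁ and p₃. -/
/-!
Newton's identities give `p₃ = p₁p₂ - e₂p₁ + 3e₃` and
`p₅ = p₁p₄ - e₂p₃ + e₃p₂ - e₄p₁ + 5e₅`. With at most four variables `e₅ = 0`, and once `3` is
invertible the first identity puts `e₃` in `(p₁, p₃)`; the second then puts `p₅` there too.
-/

open Finset

namespace MvPolynomial

variable {σ R : Type*} [Fintype σ] [CommRing R]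

theorem esymm_eq_zero_of_card_lt {k : ℕ} (hk : Fintype.card σ < k) : esymm σ R k = 0 := by
  have hk' : #(univ : Finset σ) < k := by rwa [card_univ]
  simp [esymm, powersetCard_eq_empty.mpr hk']

theorem psum_three_eq_newton :
    psum σ R 3 = psum σ R 1 * psum σ R 2 - esymm σ R 2 * psum σ R 1 + 3 * esymm σ R 3 := by
  have hIoo : {a ∈ antidiagonal 3 | a.1 ∈ Set.Ioo 0 3} = {(1, 2), (2, 1)} := by decide
  rw [psum_eq_mul_esymm_sub_sum σ R 3 (by norm_num), hIoo, sum_pair (by decide), esymm_one,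
    ← psum_one]
  ring

theorem psum_five_eq_newton :
    psum σ R 5 = psum σ R 1 * psum σ R 4 - esymm σ R 2 * psum σ R 3
      + esymm σ R 3 * psum σ R 2 - esymm σ R 4 * psum σ R 1 + 5 * esymm σ R 5 := by
  have hIoo : {a ∈ antidiagonal 5 | a.1 ∈ Set.Ioo 0 5} = {(1, 4), (2, 3), (3, 2), (4, 1)} := by
    decide
  rw [psum_eq_mul_esymm_sub_sum σ R 5 (by norm_num), hIoo, sum_insert (by decide),
    sum_insert (by decide), sum_pair (by decide), esymm_one, ← psum_one]
  ring

theorem esymm_three_mem_span_psum_one_three (h3 : IsUnit (3 : R)) :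
    esymm σ R 3 ∈ Ideal.span {psum σ R 1, psum σ R 3} := by
  have h3' := h3.map (C : R →+* MvPolynomial σ R)
  rw [map_ofNat] at h3'
  refine (Ideal.unit_mul_mem_iff_mem _ h3').mp
    (Ideal.mem_span_pair.mpr ⟨esymm σ R 2 - psum σ R 2, 1, ?_⟩)
  rw [psum_three_eq_newton]
  ring

theorem psum_five_mem_span_psum_one_three (hσ : Fintype.card σ ≤ 4) (h3 : IsUnit (3 : R)) :
    psum σ R 5 ∈ Ideal.span {psum σ R 1, psum σ R 3} := by
  set I := Ideal.span {psum σ R 1, psum σ R 3}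
  have hp1 : psum σ R 1 ∈ I := Ideal.subset_span (by simp)
  have hp3 : psum σ R 3 ∈ I := Ideal.subset_span (by simp)
  have he3 : esymm σ R 3 ∈ I := esymm_three_mem_span_psum_one_three h3
  rw [psum_five_eq_newton, esymm_eq_zero_of_card_lt (k := 5) (by omega), mul_zero, add_zero]
  exact I.sub_mem (I.add_mem (I.sub_mem (I.mul_mem_right _ hp1) (I.mul_mem_left _ hp3))
    (I.mul_mem_right _ he3)) (I.mul_mem_left _ hp1)

end MvPolynomial

open MvPolynomial in
theorem stmt_10 :
    (∑ j : Fin 4, X j ^ 5 : MvPolynomial (Fin 4) ℂ) ∈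
      Ideal.span {(∑ j : Fin 4, X j ^ 1 : MvPolynomial (Fin 4) ℂ), ∑ j : Fin 4, X j ^ 3} :=
  psum_five_mem_span_psum_one_three (Fintype.card_fin 4).le (Ne.isUnit three_ne_zero)
end

section
/- If n ≡ 3 (mod 6), then z(z+1) divides 1 + z^n + (−1−z)^n, and (z² + z + 1) does not divide 1 + z^n + (−1−z)^n in ℚ[z]. -/
/-!
For odd `n` the polynomial `1 + z^n + (-1-z)^n` vanishes at `z = 0` and `z = -1`.
Modulo `z² + z + 1` both `z` and `-1 - z` are cube roots of unity, so for `3 ∣ n` the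
polynomial is congruent to the nonzero constant `3`, which the monic quadratic cannot divide.
-/

open Polynomial

variable {R : Type*} [CommRing R]

lemma X_mul_X_add_one_dvd_of_odd {n : ℕ} (hn : Odd n) :
    (X * (X + 1) : R[X]) ∣ 1 + X ^ n + (-1 - X) ^ n := by
  have hX : (X - C 0 : R[X]) ∣ 1 + X ^ n + (-1 - X) ^ n := by
    rw [dvd_iff_isRoot]
    simp [hn.neg_one_pow, hn.pos.ne']
  have hX1 : (X - C (-1) : R[X]) ∣ 1 + X ^ n + (-1 - X) ^ n := by
    rw [dvd_iff_isRoot]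
    simp [hn.neg_one_pow, hn.pos.ne']
  have hcoprime := isCoprime_X_sub_C_of_isUnit_sub (R := R) (a := 0) (b := -1) (by simp)
  simpa using hcoprime.mul_dvd hX hX1

lemma X_sq_add_X_add_one_dvd_pow_sub_one {p : R[X]} (hp : X ^ 2 + X + 1 ∣ p ^ 3 - 1) {n : ℕ}
    (hn : 3 ∣ n) : X ^ 2 + X + 1 ∣ p ^ n - 1 := by
  obtain ⟨m, rfl⟩ := hn
  simpa [pow_mul] using hp.trans (sub_dvd_pow_sub_pow (p ^ 3) 1 m)

lemma X_sq_add_X_add_one_dvd_sub_three {n : ℕ} (hn : 3 ∣ n) :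
    (X ^ 2 + X + 1 : R[X]) ∣ 1 + X ^ n + (-1 - X) ^ n - 3 := by
  have hX := X_sq_add_X_add_one_dvd_pow_sub_one (p := (X : R[X])) ⟨X - 1, by ring⟩ hn
  have hX' := X_sq_add_X_add_one_dvd_pow_sub_one (p := (-1 - X : R[X])) ⟨-(X + 2), by ring⟩ hn
  convert hX.add hX' using 1
  ring

lemma X_sq_add_X_add_one_not_dvd_of_three_dvd (h3 : (3 : R) ≠ 0) {n : ℕ} (hn : 3 ∣ n) :
    ¬ (X ^ 2 + X + 1 : R[X]) ∣ 1 + X ^ n + (-1 - X) ^ n := by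
  have : Nontrivial R := nontrivial_of_ne _ _ h3
  intro hdvd
  have hmonic : (X ^ 2 + X + 1 : R[X]).Monic := by monicity!
  have hdeg : (X ^ 2 + X + 1 : R[X]).natDegree = 2 := by compute_degree!
  refine hmonic.not_dvd_of_natDegree_lt (q := C 3) (C_ne_zero.mpr h3) (by simp [hdeg]) ?_
  simpa [← C_ofNat] using hdvd.sub (X_sq_add_X_add_one_dvd_sub_three hn)

open Polynomial in
theorem stmt_14_general (n : ℕ) (h : n % 6 = 3) :
    ((X * (X + 1) : ℚ[X]) ∣ (1 + X ^ n + (-1 - X) ^ n)) ∧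
    ¬ ((X ^ 2 + X + 1 : ℚ[X]) ∣ (1 + X ^ n + (-1 - X) ^ n)) :=
  ⟨X_mul_X_add_one_dvd_of_odd (Nat.odd_iff.mpr (by omega)),
    X_sq_add_X_add_one_not_dvd_of_three_dvd (by norm_num) (by omega)⟩

open Polynomial in
theorem stmt_14 (n : ℕ) (hn : 0 < n) (h : n % 6 = 3) :
    ((X * (X + 1) : ℚ[X]) ∣ (1 + X ^ n + (-1 - X) ^ n)) ∧
    ¬ ((X ^ 2 + X + 1 : ℚ[X]) ∣ (1 + X ^ n + (-1 - X) ^ n)) :=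
  stmt_14_general n h
end
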